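/- Let X be a Banach space, T(t) a strongly continuous semigroup on X with ‖T(t)‖ ≤ M e^{-δt} for some M ≥ 1, δ > 0, and let u(t) = T(t)u₀ + ∫₀ᵗ T(t-s) f(u(s)) ds where f : X → X satisfies ‖f(x)‖ ≤ K ‖x‖² for all x. If ‖u(t)‖ ≤ R for all t ≥ 0 with R < δ/(2MK) and ‖u₀‖ sufficiently small, then there exist C ≥ 1 and γ > 0 with ‖u(t)‖ ≤ C e^{-γt}‖u₀‖ for all t ≥ 0. -/

import Mathlib

/-!
Weight the solution by `exp (γ t)` with `γ = δ / 2`. On `[0, t]` the mild formula, the decay of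
`T` and `‖f (u s)‖ ≤ K R ‖u s‖` give `sup e^{γs} ‖u s‖ ≤ M ‖u₀‖ + θ · sup e^{γs} ‖u s‖` with
`θ = M K R / (δ - γ) = 2 M K R / δ < 1`; the supremum is finite because `‖u‖ ≤ R`, so it can be
absorbed, giving `‖u t‖ ≤ M / (1 - θ) · e^{-γt} ‖u₀‖`.
-/

open scoped intervalIntegral
open Real Set

theorem le_mul_exp_neg_mul_iff {x B γ s : ℝ} : x ≤ B * exp (-γ * s) ↔ x * exp (γ * s) ≤ B := by
  rw [neg_mul, exp_neg, ← div_eq_mul_inv, le_div_iff₀ (exp_pos _)]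

theorem le_div_one_sub_of_forall_le_add_mul {α : Type*} {w : α → ℝ} {s : Set α} {A θ : ℝ}
    (hθ : θ < 1) (hw : BddAbove (w '' s))
    (habsorb : ∀ B, (∀ x ∈ s, w x ≤ B) → ∀ x ∈ s, w x ≤ A + θ * B) :
    ∀ x ∈ s, w x ≤ A / (1 - θ) := by
  intro x hx
  have hle_sup : ∀ y ∈ s, w y ≤ sSup (w '' s) := fun y hy => le_csSup hw (mem_image_of_mem w hy)
  have hsup : sSup (w '' s) ≤ A + θ * sSup (w '' s) :=
    csSup_le (Set.Nonempty.image w ⟨x, hx⟩) (forall_mem_image.2 (habsorb _ hle_sup))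
  calc w x ≤ sSup (w '' s) := hle_sup x hx
    _ ≤ A / (1 - θ) := by rw [le_div_iff₀ (by linarith)]; linarith

theorem integral_exp_sub_mul_exp_le {δ γ t : ℝ} (hγδ : γ < δ) :
    ∫ s in (0 : ℝ)..t, exp (-δ * (t - s)) * exp (-γ * s) ≤ exp (-γ * t) / (δ - γ) := by
  have hδγ : 0 < δ - γ := sub_pos.2 hγδ
  have hsplit : ∀ s, exp (-δ * (t - s)) * exp (-γ * s) = exp (-δ * t) * exp ((δ - γ) * s) := by
    intro s; rw [← exp_add, ← exp_add]; ring_nf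
  have hexp : exp (-δ * t) * exp ((δ - γ) * t) = exp (-γ * t) := by rw [← exp_add]; ring_nf
  simp_rw [hsplit, intervalIntegral.integral_const_mul,
    intervalIntegral.integral_comp_mul_left (fun s => exp s) hδγ.ne', integral_exp]
  rw [mul_zero, exp_zero, smul_eq_mul, ← div_eq_inv_mul, ← mul_div_assoc, mul_sub, hexp]
  gcongr
  have := exp_pos (-δ * t)
  linarith

theorem norm_integral_apply_sub_le {E F : Type*} [NormedAddCommGroup E] [NormedSpace ℝ E]
    [NormedAddCommGroup F] [NormedSpace ℝ F] {T : ℝ → E →L[ℝ] F} {g : ℝ → E} {M δ γ c t : ℝ}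
    (hT : ∀ τ, 0 ≤ τ → ‖T τ‖ ≤ M * exp (-δ * τ)) (hg : ∀ s ∈ Icc 0 t, ‖g s‖ ≤ c * exp (-γ * s))
    (hγδ : γ < δ) (ht : 0 ≤ t) :
    ‖∫ s in (0 : ℝ)..t, T (t - s) (g s)‖ ≤ M * c * exp (-γ * t) / (δ - γ) := by
  have hM : 0 ≤ M := by simpa using (norm_nonneg _).trans (hT 0 le_rfl)
  have hc : 0 ≤ c := by simpa using (norm_nonneg _).trans (hg 0 ⟨le_rfl, ht⟩)
  have hpointwise : ∀ s ∈ Ioc 0 t,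
      ‖T (t - s) (g s)‖ ≤ M * c * (exp (-δ * (t - s)) * exp (-γ * s)) := fun s hs =>
    calc ‖T (t - s) (g s)‖ ≤ ‖T (t - s)‖ * ‖g s‖ := (T (t - s)).le_opNorm _
      _ ≤ M * exp (-δ * (t - s)) * (c * exp (-γ * s)) := by
          gcongr
          · exact hT _ (sub_nonneg.2 hs.2)
          · exact hg s (Ioc_subset_Icc_self hs)
      _ = M * c * (exp (-δ * (t - s)) * exp (-γ * s)) := by ring
  calc ‖∫ s in (0 : ℝ)..t, T (t - s) (g s)‖
      ≤ ∫ s in (0 : ℝ)..t, M * c * (exp (-δ * (t - s)) * exp (-γ * s)) :=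
        intervalIntegral.norm_integral_le_of_norm_le ht (.of_forall hpointwise)
          (by apply Continuous.intervalIntegrable; fun_prop)
    _ = M * c * ∫ s in (0 : ℝ)..t, exp (-δ * (t - s)) * exp (-γ * s) :=
        intervalIntegral.integral_const_mul _ _
    _ ≤ M * c * (exp (-γ * t) / (δ - γ)) := by gcongr; exact integral_exp_sub_mul_exp_le hγδ
    _ = M * c * exp (-γ * t) / (δ - γ) := by ring

theorem norm_mild_solution_le {X : Type*} [NormedAddCommGroup X] [NormedSpace ℝ X]
    {T : ℝ → X →L[ℝ] X} {f : X → X} {u : ℝ → X} {u₀ : X} {M δ γ K R B t : ℝ}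
    (hT : ∀ τ, 0 ≤ τ → ‖T τ‖ ≤ M * exp (-δ * τ)) (hK : 0 ≤ K) (hf : ∀ x, ‖f x‖ ≤ K * ‖x‖ ^ 2)
    (hγδ : γ < δ) (ht : 0 ≤ t)
    (hmild : u t = T t u₀ + ∫ s in (0 : ℝ)..t, T (t - s) (f (u s)))
    (hR : ∀ s ∈ Icc 0 t, ‖u s‖ ≤ R) (hB : ∀ s ∈ Icc 0 t, ‖u s‖ ≤ B * exp (-γ * s)) :
    ‖u t‖ ≤ (M * ‖u₀‖ + M * K * R / (δ - γ) * B) * exp (-γ * t) := by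
  have hM : 0 ≤ M := by simpa using (norm_nonneg _).trans (hT 0 le_rfl)
  have hR0 : 0 ≤ R := (norm_nonneg _).trans (hR 0 ⟨le_rfl, ht⟩)
  have hlinear : ‖T t u₀‖ ≤ M * ‖u₀‖ * exp (-γ * t) :=
    calc ‖T t u₀‖ ≤ ‖T t‖ * ‖u₀‖ := (T t).le_opNorm u₀
      _ ≤ M * exp (-δ * t) * ‖u₀‖ := by gcongr; exact hT t ht
      _ ≤ M * exp (-γ * t) * ‖u₀‖ := by gcongr
      _ = M * ‖u₀‖ * exp (-γ * t) := by ring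
  have hquadratic : ∀ s ∈ Icc 0 t, ‖f (u s)‖ ≤ K * R * B * exp (-γ * s) := fun s hs =>
    calc ‖f (u s)‖ ≤ K * (‖u s‖ * ‖u s‖) := by rw [← sq]; exact hf _
      _ ≤ K * (R * (B * exp (-γ * s))) := by gcongr; exacts [hR s hs, hB s hs]
      _ = K * R * B * exp (-γ * s) := by ring
  calc ‖u t‖ ≤ ‖T t u₀‖ + ‖∫ s in (0 : ℝ)..t, T (t - s) (f (u s))‖ := hmild ▸ norm_add_le _ _
    _ ≤ M * ‖u₀‖ * exp (-γ * t) + M * (K * R * B) * exp (-γ * t) / (δ - γ) :=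
        add_le_add hlinear (norm_integral_apply_sub_le hT hquadratic hγδ ht)
    _ = (M * ‖u₀‖ + M * K * R / (δ - γ) * B) * exp (-γ * t) := by ring

theorem norm_mild_solution_le_exp_of_forall_norm_le {X : Type*} [NormedAddCommGroup X]
    [NormedSpace ℝ X] {T : ℝ → X →L[ℝ] X} {f : X → X} {u : ℝ → X} {u₀ : X} {M δ γ K R : ℝ}
    (hT : ∀ τ, 0 ≤ τ → ‖T τ‖ ≤ M * exp (-δ * τ)) (hK : 0 ≤ K) (hf : ∀ x, ‖f x‖ ≤ K * ‖x‖ ^ 2)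
    (hγδ : γ < δ) (hθ : M * K * R / (δ - γ) < 1)
    (hmild : ∀ t, 0 ≤ t → u t = T t u₀ + ∫ s in (0 : ℝ)..t, T (t - s) (f (u s)))
    (hR : ∀ t, 0 ≤ t → ‖u t‖ ≤ R) {t : ℝ} (ht : 0 ≤ t) :
    ‖u t‖ ≤ M * ‖u₀‖ / (1 - M * K * R / (δ - γ)) * exp (-γ * t) := by
  set w : ℝ → ℝ := fun s => ‖u s‖ * exp (γ * s)
  have hw : BddAbove (w '' Icc 0 t) := by
    refine ⟨R * exp (|γ| * t), forall_mem_image.2 fun s hs => ?_⟩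
    have hexp : γ * s ≤ |γ| * t := by
      gcongr
      exacts [hs.1, le_abs_self γ, hs.2]
    exact mul_le_mul (hR s hs.1) (exp_le_exp.2 hexp) (exp_nonneg _)
      ((norm_nonneg _).trans (hR s hs.1))
  have habsorb : ∀ B, (∀ s ∈ Icc 0 t, w s ≤ B) →
      ∀ s ∈ Icc 0 t, w s ≤ M * ‖u₀‖ + M * K * R / (δ - γ) * B := fun B hB s hs =>
    le_mul_exp_neg_mul_iff.1 <| norm_mild_solution_le hT hK hf hγδ hs.1 (hmild s hs.1)
      (fun r hr => hR r hr.1)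
      (fun r hr => le_mul_exp_neg_mul_iff.2 (hB r ⟨hr.1, hr.2.trans hs.2⟩))
  exact le_mul_exp_neg_mul_iff.2 <|
    le_div_one_sub_of_forall_le_add_mul hθ hw habsorb t ⟨ht, le_rfl⟩

theorem mild_solution_exponential_decay_general
    {X : Type*} [NormedAddCommGroup X] [NormedSpace ℝ X]
    (T : ℝ → X →L[ℝ] X) (M δ K R : ℝ) (hM : 1 ≤ M) (hδ : 0 < δ) (hK : 0 < K)
    (hdecay : ∀ t : ℝ, 0 ≤ t → ‖T t‖ ≤ M * Real.exp (-δ * t))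
    (f : X → X) (hf : ∀ x : X, ‖f x‖ ≤ K * ‖x‖ ^ 2)
    (hR : R < δ / (2 * M * K)) :
    ∃ ε : ℝ, 0 < ε ∧ ∀ (u₀ : X) (u : ℝ → X), ‖u₀‖ ≤ ε →
      (∀ t : ℝ, 0 ≤ t → u t = T t u₀ + ∫ s in (0 : ℝ)..t, T (t - s) (f (u s))) →
      (∀ t : ℝ, 0 ≤ t → ‖u t‖ ≤ R) →
      ∃ C γ : ℝ, 1 ≤ C ∧ 0 < γ ∧ ∀ t : ℝ, 0 ≤ t →
        ‖u t‖ ≤ C * Real.exp (-γ * t) * ‖u₀‖ := by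
  refine ⟨1, one_pos, fun u₀ u _ hmild hbdd => ?_⟩
  have hR0 : 0 ≤ R := (norm_nonneg _).trans (hbdd 0 le_rfl)
  have hγδ : δ / 2 < δ := half_lt_self hδ
  set θ := M * K * R / (δ - δ / 2)
  have hθ0 : 0 ≤ θ := by positivity
  have hθ1 : θ < 1 := by
    rw [div_lt_one (by linarith)]
    rw [lt_div_iff₀ (by positivity)] at hR
    linarith
  refine ⟨M / (1 - θ), δ / 2, ?_, half_pos hδ, fun t ht => ?_⟩
  · rw [le_div_iff₀ (by linarith)]
    linarith
  · calc ‖u t‖ ≤ M * ‖u₀‖ / (1 - θ) * exp (-(δ / 2) * t) :=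
          norm_mild_solution_le_exp_of_forall_norm_le hdecay hK.le hf hγδ hθ1 hmild hbdd ht
      _ = M / (1 - θ) * exp (-(δ / 2) * t) * ‖u₀‖ := by ring

/-- A mild solution of a semilinear equation with quadratically bounded nonlinearity and
exponentially stable linear part decays exponentially, provided it stays in a sufficiently
small ball and the initial datum is sufficiently small. -/
theorem mild_solution_exponential_decay
    {X : Type*} [NormedAddCommGroup X] [NormedSpace ℝ X] [CompleteSpace X]
    (T : ℝ → X →L[ℝ] X) (M δ K R : ℝ) (hM : 1 ≤ M) (hδ : 0 < δ) (hK : 0 < K)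
    (hsem : ∀ t s : ℝ, 0 ≤ t → 0 ≤ s → T (t + s) = (T t).comp (T s))
    (hT0 : T 0 = ContinuousLinearMap.id ℝ X)
    (hdecay : ∀ t : ℝ, 0 ≤ t → ‖T t‖ ≤ M * Real.exp (-δ * t))
    (f : X → X) (hf : ∀ x : X, ‖f x‖ ≤ K * ‖x‖ ^ 2)
    (hR : R < δ / (2 * M * K)) :
    ∃ ε : ℝ, 0 < ε ∧ ∀ (u₀ : X) (u : ℝ → X), ‖u₀‖ ≤ ε →
      (∀ t : ℝ, 0 ≤ t → u t = T t u₀ + ∫ s in (0 : ℝ)..t, T (t - s) (f (u s))) →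
      (∀ t : ℝ, 0 ≤ t → ‖u t‖ ≤ R) →
      ∃ C γ : ℝ, 1 ≤ C ∧ 0 < γ ∧ ∀ t : ℝ, 0 ≤ t →
        ‖u t‖ ≤ C * Real.exp (-γ * t) * ‖u₀‖ :=
  mild_solution_exponential_decay_general T M δ K R hM hδ hK hdecay f hf hR
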